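/- Let v(t) := ∂u(t; a, s)/∂s, where u(·;a,s) solves -(p u')' + q u = a m u with u(s;a,s)=0, u'(s;a,s)=1/p(s). Then v satisfies the same equation -(p v')' + q v = a m v, and v(s) = -1/p(s) < 0, while v(φ_a(s)) > 0. -/

import Mathlib

/-!
Fix two solutions `y = u s` and `z = u t₁` with nonzero Wronskian. Cramer's rule writes every
`u σ` as a combination of `y` and `z` whose coefficients are Wronskians at `t₁`, affine in
`(u σ t₁, u' σ t₁)` and hence differentiable in `σ`; so `v` is the corresponding combination of
`y` and `z`, again a solution, and differentiating `u σ σ = 0` gives `v s = -u' s s = -1 / p s`.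
Since `u s` is positive on `(s, φ)` and has only simple zeros, `u' s φ < 0`; the Wronskian of
`v` and `u s` equals `v s < 0` at `s` and `v φ · p φ · u' s φ` at `φ`, so `v φ > 0`.
-/

open Set

open Filter Topology

theorem ODE_solution_unique_linear {E : Type*} [NormedAddCommGroup E] [NormedSpace ℝ E]
    {A : ℝ → E →L[ℝ] E} (hA : Continuous A) {f g : ℝ → E} {t₀ : ℝ}
    (hf : ∀ t, HasDerivAt f (A t (f t)) t) (hg : ∀ t, HasDerivAt g (A t (g t)) t)
    (heq : f t₀ = g t₀) : f = g := by
  funext t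
  obtain ⟨a, b, ht₀, ht⟩ : ∃ a b, t₀ ∈ Ioo a b ∧ t ∈ Ioo a b :=
    ⟨min t₀ t - 1, max t₀ t + 1, by grind, by grind⟩
  obtain ⟨C, hC⟩ :=
    isCompact_Icc.exists_bound_of_continuousOn (hA.norm.continuousOn (s := Icc a b))
  have hlip : ∀ τ ∈ Ioo a b, LipschitzOnWith C.toNNReal (A τ) univ := fun τ hτ => by
    refine ((A τ).lipschitz.weaken ?_).lipschitzOnWith
    rw [← NNReal.coe_le_coe, coe_nnnorm, Real.coe_toNNReal']
    exact le_max_of_le_left ((le_abs_self _).trans (hC τ (Ioo_subset_Icc_self hτ)))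
  exact ODE_solution_unique_of_mem_Ioo hlip ht₀ (fun τ _ => ⟨hf τ, trivial⟩)
    (fun τ _ => ⟨hg τ, trivial⟩) heq ht

/-- The equation `-(p u')' + q u = a m u` is the case `r = q - a m`. -/
def IsSLSolution (p r y y' : ℝ → ℝ) : Prop :=
  ∀ t, HasDerivAt y (y' t) t ∧ HasDerivAt (fun τ => p τ * y' τ) (r t * y t) t

theorem isSLSolution_iff {p q m y y' : ℝ → ℝ} {a : ℝ} :
    IsSLSolution p (fun t => q t - a * m t) y y' ↔
      ∀ t, HasDerivAt y (y' t) t ∧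
        HasDerivAt (fun τ => p τ * y' τ) (q t * y t - a * m t * y t) t := by
  simp only [IsSLSolution, sub_mul]

def slWronskian (p y y' z z' : ℝ → ℝ) (t : ℝ) : ℝ :=
  y t * (p t * z' t) - z t * (p t * y' t)

namespace IsSLSolution

variable {p r y y' z z' w w' : ℝ → ℝ}

theorem continuous (hy : IsSLSolution p r y y') : Continuous y :=
  continuous_iff_continuousAt.mpr fun t => (hy t).1.continuousAt

theorem zero : IsSLSolution p r 0 0 := fun t =>
  ⟨hasDerivAt_const t 0, by simpa using hasDerivAt_const t (0 : ℝ)⟩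

theorem const_mul_add_const_mul (hy : IsSLSolution p r y y') (hz : IsSLSolution p r z z')
    (c₁ c₂ : ℝ) :
    IsSLSolution p r (fun t => c₁ * y t + c₂ * z t) (fun t => c₁ * y' t + c₂ * z' t) := by
  intro t
  refine ⟨((hy t).1.const_mul c₁).add ((hz t).1.const_mul c₂), ?_⟩
  show HasDerivAt (fun τ => p τ * (c₁ * y' τ + c₂ * z' τ)) (r t * (c₁ * y t + c₂ * z t)) t
  have hfun : (fun τ => p τ * (c₁ * y' τ + c₂ * z' τ)) =
      fun τ => c₁ * (p τ * y' τ) + c₂ * (p τ * z' τ) := funext fun τ => by ring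
  rw [hfun]
  exact (((hy t).2.const_mul c₁).add ((hz t).2.const_mul c₂)).congr_deriv (by ring)

theorem unique (hp : Continuous p) (hr : Continuous r) (hppos : ∀ t, 0 < p t)
    (hy : IsSLSolution p r y y') (hz : IsSLSolution p r z z') {t₀ : ℝ}
    (h₀ : y t₀ = z t₀) (h₁ : y' t₀ = z' t₀) : y = z ∧ y' = z' := by
  -- `(y, p y')` solves the linear system `X' = [[0, 1 / p], [r, 0]] X`.
  let A : ℝ → (ℝ × ℝ) →L[ℝ] ℝ × ℝ := fun t =>
    (p t)⁻¹ • (ContinuousLinearMap.inl ℝ ℝ ℝ ∘L ContinuousLinearMap.snd ℝ ℝ ℝ) +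
      r t • (ContinuousLinearMap.inr ℝ ℝ ℝ ∘L ContinuousLinearMap.fst ℝ ℝ ℝ)
  have hA : Continuous A :=
    ((hp.inv₀ fun t => (hppos t).ne').smul continuous_const).add (hr.smul continuous_const)
  have hsys : ∀ {f f'}, IsSLSolution p r f f' →
      ∀ t, HasDerivAt (fun τ => (f τ, p τ * f' τ)) (A t (f t, p t * f' t)) t := by
    intro f f' hf t
    convert (hf t).1.prodMk (hf t).2 using 1
    simp [A, (hppos t).ne']
  have hyz : y = z := by
    have := ODE_solution_unique_linear hA (hsys hy) (hsys hz) (by rw [h₀, h₁])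
    exact funext fun t => congrArg Prod.fst (congrFun this t)
  subst hyz
  exact ⟨rfl, funext fun t => (hy t).1.unique (hz t).1⟩

theorem eq_zero_of_double_zero (hp : Continuous p) (hr : Continuous r) (hppos : ∀ t, 0 < p t)
    (hy : IsSLSolution p r y y') {t₀ : ℝ} (h₀ : y t₀ = 0) (h₁ : y' t₀ = 0) : y = 0 ∧ y' = 0 :=
  hy.unique hp hr hppos zero h₀ h₁

theorem slWronskian_eq (hy : IsSLSolution p r y y') (hz : IsSLSolution p r z z') (t t₀ : ℝ) :
    slWronskian p y y' z z' t = slWronskian p y y' z z' t₀ := by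
  have hW : ∀ t, HasDerivAt (slWronskian p y y' z z') 0 t := fun t =>
    (((hy t).1.mul (hz t).2).sub ((hz t).1.mul (hy t).2)).congr_deriv (by ring)
  exact is_const_of_deriv_eq_zero (fun t => (hW t).differentiableAt) (fun t => (hW t).deriv) t t₀

/-- Cramer's rule in the two-dimensional solution space: a ring identity at `t₁`, hence an
identity of solutions by uniqueness. -/
theorem slWronskian_mul_eq (hp : Continuous p) (hr : Continuous r) (hppos : ∀ t, 0 < p t)
    (hy : IsSLSolution p r y y') (hz : IsSLSolution p r z z') (hw : IsSLSolution p r w w')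
    (t₁ t : ℝ) :
    slWronskian p y y' z z' t₁ * w t =
        slWronskian p w w' z z' t₁ * y t + slWronskian p y y' w w' t₁ * z t ∧
      slWronskian p y y' z z' t₁ * w' t =
        slWronskian p w w' z z' t₁ * y' t + slWronskian p y y' w w' t₁ * z' t := by
  obtain ⟨h, h'⟩ := (hw.const_mul_add_const_mul hw (slWronskian p y y' z z' t₁) 0).unique
    hp hr hppos
    (hy.const_mul_add_const_mul hz (slWronskian p w w' z z' t₁) (slWronskian p y y' w w' t₁))
    (t₀ := t₁) (by simp only [slWronskian]; ring)
    (by apply mul_left_cancel₀ (hppos t₁).ne'; simp only [slWronskian]; ring)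
  simpa using And.intro (congrFun h t) (congrFun h' t)

end IsSLSolution

section ParamDeriv

variable {p r y y' z z' : ℝ → ℝ} {u u' : ℝ → ℝ → ℝ} {v v' : ℝ → ℝ} {s : ℝ}

theorem hasDerivAt_slWronskian_left {t : ℝ} (hv : HasDerivAt (fun σ => u σ t) (v t) s)
    (hv' : HasDerivAt (fun σ => u' σ t) (v' t) s) :
    HasDerivAt (fun σ => slWronskian p (u σ) (u' σ) z z' t) (slWronskian p v v' z z' t) s :=
  (hv.mul_const _).sub ((hv'.const_mul (p t)).const_mul (z t))

theorem hasDerivAt_slWronskian_right {t : ℝ} (hv : HasDerivAt (fun σ => u σ t) (v t) s)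
    (hv' : HasDerivAt (fun σ => u' σ t) (v' t) s) :
    HasDerivAt (fun σ => slWronskian p y y' (u σ) (u' σ) t) (slWronskian p y y' v v' t) s :=
  ((hv'.const_mul (p t)).const_mul (y t)).sub (hv.mul_const _)

theorem slWronskian_mul_eq_of_hasDerivAt (hp : Continuous p) (hr : Continuous r)
    (hppos : ∀ t, 0 < p t) (hy : IsSLSolution p r y y') (hz : IsSLSolution p r z z')
    (hu : ∀ σ, IsSLSolution p r (u σ) (u' σ)) (hv : ∀ t, HasDerivAt (fun σ => u σ t) (v t) s)
    (hv' : ∀ t, HasDerivAt (fun σ => u' σ t) (v' t) s) (t₁ t : ℝ) :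
    slWronskian p y y' z z' t₁ * v t =
        slWronskian p v v' z z' t₁ * y t + slWronskian p y y' v v' t₁ * z t ∧
      slWronskian p y y' z z' t₁ * v' t =
        slWronskian p v v' z z' t₁ * y' t + slWronskian p y y' v v' t₁ * z' t := by
  have hcramer σ := hy.slWronskian_mul_eq hp hr hppos hz (hu σ) t₁ t
  have hL := hasDerivAt_slWronskian_left (p := p) (z := z) (z' := z') (hv t₁) (hv' t₁)
  have hR := hasDerivAt_slWronskian_right (p := p) (y := y) (y' := y') (hv t₁) (hv' t₁)
  constructor
  · refine ((hv t).const_mul (slWronskian p y y' z z' t₁)).unique ?_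
    simp_rw [fun σ => (hcramer σ).1]
    exact (hL.mul_const _).add (hR.mul_const _)
  · refine ((hv' t).const_mul (slWronskian p y y' z z' t₁)).unique ?_
    simp_rw [fun σ => (hcramer σ).2]
    exact (hL.mul_const _).add (hR.mul_const _)

theorem IsSLSolution.of_hasDerivAt_param (hp : Continuous p) (hr : Continuous r)
    (hppos : ∀ t, 0 < p t) (hy : IsSLSolution p r y y') (hz : IsSLSolution p r z z') {t₁ : ℝ}
    (hW : slWronskian p y y' z z' t₁ ≠ 0) (hu : ∀ σ, IsSLSolution p r (u σ) (u' σ))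
    (hv : ∀ t, HasDerivAt (fun σ => u σ t) (v t) s)
    (hv' : ∀ t, HasDerivAt (fun σ => u' σ t) (v' t) s) :
    IsSLSolution p r v v' := by
  have hcramer := slWronskian_mul_eq_of_hasDerivAt hp hr hppos hy hz hu hv hv' t₁
  convert hy.const_mul_add_const_mul hz (slWronskian p v v' z z' t₁ / slWronskian p y y' z z' t₁)
    (slWronskian p y y' v v' t₁ / slWronskian p y y' z z' t₁) using 1 <;> funext t <;> field_simp
  · linear_combination (hcramer t).1
  · linear_combination (hcramer t).2

theorem hasDerivAt_diag_of_isSLSolution (hp : Continuous p) (hr : Continuous r)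
    (hppos : ∀ t, 0 < p t) (hy : IsSLSolution p r y y') (hz : IsSLSolution p r z z') {t₁ : ℝ}
    (hW : slWronskian p y y' z z' t₁ ≠ 0) (hu : ∀ σ, IsSLSolution p r (u σ) (u' σ))
    (hv : ∀ t, HasDerivAt (fun σ => u σ t) (v t) s)
    (hv' : ∀ t, HasDerivAt (fun σ => u' σ t) (v' t) s) :
    HasDerivAt (fun σ => u σ σ) (v s + u' s s) s := by
  have hL := hasDerivAt_slWronskian_left (p := p) (z := z) (z' := z') (hv t₁) (hv' t₁)
  have hR := hasDerivAt_slWronskian_right (p := p) (y := y) (y' := y') (hv t₁) (hv' t₁)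
  have h : HasDerivAt (fun σ => slWronskian p y y' z z' t₁ * u σ σ)
      (slWronskian p y y' z z' t₁ * (v s + u' s s)) s := by
    have hfun : (fun σ => slWronskian p y y' z z' t₁ * u σ σ) =
        (fun σ => slWronskian p (u σ) (u' σ) z z' t₁) * y +
          (fun σ => slWronskian p y y' (u σ) (u' σ) t₁) * z :=
      funext fun σ => (hy.slWronskian_mul_eq hp hr hppos hz (hu σ) t₁ σ).1
    rw [hfun]
    refine ((hL.mul (hy s).1).add (hR.mul (hz s).1)).congr_deriv ?_
    linear_combination -(slWronskian_mul_eq_of_hasDerivAt hp hr hppos hy hz hu hv hv' t₁ s).1 -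
        (hy.slWronskian_mul_eq hp hr hppos hz (hu s) t₁ s).2
  simpa [← mul_assoc, inv_mul_cancel₀ hW] using h.const_mul (slWronskian p y y' z z' t₁)⁻¹

end ParamDeriv

/-- The paper's `φ_a(s)` for `f = u(·; a, s)`; it is the junk value `sInf ∅ = 0` when `f` has no
zero after `s`. -/
noncomputable def firstZeroAfter (f : ℝ → ℝ) (s : ℝ) : ℝ := sInf {t | s < t ∧ f t = 0}

section FirstZero

variable {f : ℝ → ℝ} {s f' : ℝ}

theorem eventually_pos_nhdsGT_of_hasDerivAt (hf : HasDerivAt f f' s) (hs : f s = 0)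
    (hf' : 0 < f') : ∀ᶠ t in 𝓝[>] s, 0 < f t := by
  have hslope := (hasDerivAt_iff_tendsto_slope.mp hf).mono_left (nhdsGT_le_nhdsNE s)
  filter_upwards [hslope.eventually (eventually_gt_nhds hf'), self_mem_nhdsWithin] with t ht hst
  exact pos_of_slope_pos hst ht hs

theorem firstZeroAfter_spec (hf : Continuous f) (hpos : ∀ᶠ t in 𝓝[>] s, 0 < f t)
    (hne : {t | s < t ∧ f t = 0}.Nonempty) :
    s < firstZeroAfter f s ∧ f (firstZeroAfter f s) = 0 := by
  obtain ⟨b, hsb, hb⟩ := mem_nhdsGT_iff_exists_Ioo_subset.mp hpos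
  refine ⟨lt_of_lt_of_le hsb (le_csInf hne fun t ht => ?_), ?_⟩
  · by_contra! htb
    exact (hb ⟨ht.1, htb⟩ : 0 < f t).ne' ht.2
  · exact closure_minimal (fun t ht => ht.2) (isClosed_eq hf continuous_const)
      (csInf_mem_closure hne ⟨s, fun t ht => ht.1.le⟩)

theorem pos_of_mem_Ioo_firstZeroAfter (hf : Continuous f) (hpos : ∀ᶠ t in 𝓝[>] s, 0 < f t)
    {t : ℝ} (ht : t ∈ Ioo s (firstZeroAfter f s)) : 0 < f t := by
  by_contra! hft
  obtain ⟨t', hft', hst', ht't⟩ := (hpos.and (Ioo_mem_nhdsGT ht.1)).exists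
  obtain ⟨c, hc, hfc⟩ := intermediate_value_Icc' ht't.le hf.continuousOn ⟨hft, hft'.le⟩
  have hφc : firstZeroAfter f s ≤ c := csInf_le ⟨s, fun t ht => ht.1.le⟩ ⟨hst'.trans_le hc.1, hfc⟩
  exact (hc.2.trans_lt ht.2).not_ge hφc

theorem HasDerivAt.nonpos_of_pos_on_Ioo {a b : ℝ} (hf : HasDerivAt f f' b) (hab : a < b)
    (hb : f b = 0) (hpos : ∀ t ∈ Ioo a b, 0 < f t) : f' ≤ 0 := by
  refine le_of_tendsto ((hasDerivAt_iff_tendsto_slope.mp hf).mono_left (nhdsLT_le_nhdsNE b)) ?_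
  filter_upwards [Ioo_mem_nhdsLT hab] with t ht
  rw [slope_def_field, hb, sub_zero]
  exact (div_neg_of_pos_of_neg (hpos t ht) (sub_neg.mpr ht.2)).le

end FirstZero

theorem derivative_in_s_properties_general
    (p q m : ℝ → ℝ) (a s : ℝ) (u u' : ℝ → ℝ → ℝ) (v v' : ℝ → ℝ)
    (hp : Continuous p) (hq : Continuous q) (hm : Continuous m)
    (hppos : ∀ t, 0 < p t)
    (hsol : ∀ σ : ℝ, u σ σ = 0 ∧ u' σ σ = 1 / p σ ∧
      ∀ t, HasDerivAt (u σ) (u' σ t) t ∧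
        HasDerivAt (fun τ => p τ * u' σ τ) (q t * u σ t - a * m t * u σ t) t)
    (hv : ∀ t, HasDerivAt (fun σ => u σ t) (v t) s)
    (hv' : ∀ t, HasDerivAt (fun σ => u' σ t) (v' t) s)
    (hne : {t | s < t ∧ u s t = 0}.Nonempty) :
    v s = -(1 / p s) ∧ v s < 0 ∧
      (∀ t, HasDerivAt v (v' t) t ∧
        HasDerivAt (fun τ => p τ * v' τ) (q t * v t - a * m t * v t) t) ∧
      0 < v (sInf {t | s < t ∧ u s t = 0}) := by
  have hr : Continuous fun t => q t - a * m t := by fun_prop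
  have hsl σ : IsSLSolution p (fun t => q t - a * m t) (u σ) (u' σ) :=
    isSLSolution_iff.mpr (hsol σ).2.2
  obtain ⟨hus₀, hus₁, -⟩ := hsol s
  have hps : 0 < 1 / p s := one_div_pos.mpr (hppos s)
  have hright := eventually_pos_nhdsGT_of_hasDerivAt (hus₁ ▸ (hsl s s).1) hus₀ hps
  obtain ⟨hsφ, huφ⟩ := firstZeroAfter_spec (hsl s).continuous hright hne
  have hpos t := pos_of_mem_Ioo_firstZeroAfter (t := t) (hsl s).continuous hright
  set φ := firstZeroAfter (u s) s
  obtain ⟨t₁, ht₁⟩ : ∃ t₁, u s t₁ ≠ 0 := ⟨(s + φ) / 2, (hpos _ ⟨by linarith, by linarith⟩).ne'⟩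
  have hW : slWronskian p (u s) (u' s) (u t₁) (u' t₁) t₁ ≠ 0 := by
    simpa [slWronskian, (hsol t₁).1, (hsol t₁).2.1, (hppos t₁).ne'] using ht₁
  have hvsol := (hsl s).of_hasDerivAt_param hp hr hppos (hsl t₁) hW hsl hv hv'
  have hvs : v s = -(1 / p s) := by
    have hdiag := hasDerivAt_diag_of_isSLSolution hp hr hppos (hsl s) (hsl t₁) hW hsl hv hv'
    have h0 : (fun σ => u σ σ) = fun _ => 0 := funext fun σ => (hsol σ).1
    rw [h0, hus₁] at hdiag
    linarith [hdiag.unique (hasDerivAt_const s 0)]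
  have hu'φ : u' s φ < 0 := by
    refine ((hsl s φ).1.nonpos_of_pos_on_Ioo hsφ huφ hpos).lt_of_ne fun h => hps.ne' ?_
    rw [← hus₁, ((hsl s).eq_zero_of_double_zero hp hr hppos huφ h).2, Pi.zero_apply]
  have hWvφ := hvsol.slWronskian_eq (hsl s) φ s
  simp only [slWronskian, huφ, hus₀, hus₁, hvs, zero_mul, sub_zero,
    mul_one_div_cancel (hppos s).ne', mul_one] at hWvφ
  refine ⟨hvs, hvs ▸ neg_neg_of_pos hps, isSLSolution_iff.mp hvsol, ?_⟩
  exact pos_of_mul_neg_left (hWvφ ▸ neg_neg_of_pos hps) (mul_neg_of_pos_of_neg (hppos φ) hu'φ).le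

/-- Let `v(t) = ∂u(t;a,s)/∂s`, where `u σ` (for `σ` near `s`)
solves `-(p u')' + q u = a·m·u` with `u σ σ = 0`, `(u σ)' σ = 1/p σ`.  Then `v`
satisfies the same equation, `v s = -1/p s < 0`, and `v(φ_a(s)) > 0`, where
`φ_a(s)` is the first zero of `u s` after `s`. -/
theorem derivative_in_s_properties
    (p q m : ℝ → ℝ) (a s : ℝ) (u u' : ℝ → ℝ → ℝ) (v v' : ℝ → ℝ)
    (hp : Continuous p) (hq : Continuous q) (hm : Continuous m)
    (hppos : ∀ t, 0 < p t) (hqnn : ∀ t, 0 ≤ q t)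
    (hsol : ∀ σ : ℝ, u σ σ = 0 ∧ u' σ σ = 1 / p σ ∧
      ∀ t, HasDerivAt (u σ) (u' σ t) t ∧
        HasDerivAt (fun τ => p τ * u' σ τ) (q t * u σ t - a * m t * u σ t) t)
    (hu : Continuous fun x : ℝ × ℝ => u x.1 x.2)
    (hu' : Continuous fun x : ℝ × ℝ => u' x.1 x.2)
    (hv : ∀ t, HasDerivAt (fun σ => u σ t) (v t) s)
    (hv' : ∀ t, HasDerivAt (fun σ => u' σ t) (v' t) s)
    (hne : {t | s < t ∧ u s t = 0}.Nonempty) :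
    v s = -(1 / p s) ∧ v s < 0 ∧
      (∀ t, HasDerivAt v (v' t) t ∧
        HasDerivAt (fun τ => p τ * v' τ) (q t * v t - a * m t * v t) t) ∧
      0 < v (sInf {t | s < t ∧ u s t = 0}) :=
  derivative_in_s_properties_general p q m a s u u' v v' hp hq hm hppos hsol hv hv' hne
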